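/- arXiv:1304.2959 — 3 statements merged into one kernel-verified Lean document; each statement's English description precedes it below -/
import Mathlib

section
/- Every conjugate of a simple k-power is itself a simple k-power (k ≥ 2). -/
/-- `p^k`: the word `p` concatenated `k` times. -/
def listPow {α : Type*} (p : List α) (k : ℕ) : List α := (List.replicate k p).flatten

/-- A `k`-power is a nonempty word of the form `p^k`. -/
def IsKPower {α : Type*} (k : ℕ) (w : List α) : Prop := ∃ p : List α, p ≠ [] ∧ w = listPow p k

/-- A simple `k`-power: a `k`-power none of whose proper factors is a `k`-power. -/
def SimpleKPower {α : Type*} (k : ℕ) (w : List α) : Prop :=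
  IsKPower k w ∧ ∀ y : List α, y <:+: w → y ≠ w → ¬ IsKPower k y

lemma listPow_succ {α : Type*} (p : List α) (k : ℕ) : listPow p (k+1) = p ++ listPow p k := by
  simp [listPow, List.replicate_succ]

lemma length_listPow {α : Type*} (p : List α) (k : ℕ) : (listPow p k).length = k * p.length := by
  induction k with
  | zero => simp [listPow]
  | succ k ih => rw [listPow_succ]; simp [ih]; ring

lemma listPow_add {α : Type*} (p : List α) (a b : ℕ) :
    listPow p (a+b) = listPow p a ++ listPow p b := by
  induction a with
  | zero => simp [listPow]
  | succ a ih =>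
    have e : a+1+b = (a+b)+1 := by omega
    rw [e, listPow_succ, listPow_succ, ih, List.append_assoc]

lemma getElem_listPow {α : Type*} (p : List α) (k j : ℕ) (h0 : 0 < p.length)
    (hj : j < (listPow p k).length) :
    (listPow p k)[j] = p[j % p.length]'(Nat.mod_lt j h0) := by
  induction k generalizing j with
  | zero => simp [listPow] at hj
  | succ k ih =>
    have e : listPow p (k+1) = p ++ listPow p k := listPow_succ p k
    have hj2 : j < (p ++ listPow p k).length := by rw [← e]; exact hj
    rw [List.getElem_of_eq e hj]
    by_cases hc : j < p.length
    · rw [List.getElem_append_left hc]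
      have : j % p.length = j := Nat.mod_eq_of_lt hc
      simp only [this]
    · rw [List.getElem_append_right (le_of_not_gt hc)]
      have hj' : j - p.length < (listPow p k).length := by
        simp only [List.length_append] at hj2; omega
      rw [ih _ hj']
      have : j % p.length = (j - p.length) % p.length := Nat.mod_eq_sub_mod (le_of_not_gt hc)
      simp only [this]

lemma eq_listPow_of_getElem {α : Type*} (s w : List α) (h0 : 0 < s.length) (k : ℕ)
    (hl : w.length = k * s.length)
    (he : ∀ j (hj : j < w.length), w[j] = s[j % s.length]'(Nat.mod_lt j h0)) :
    w = listPow s k := by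
  apply List.ext_getElem (by rw [length_listPow, hl])
  intro j h1 h2
  rw [he j h1, getElem_listPow s k j h0 h2]


lemma mod_reduce {α : Type*} (p : List α) (hp : 0 < p.length) (m' b B : ℕ) (hm' : 0 < m')
    (step : ∀ t, t + m' < B → p[(b + t + m') % p.length]'(Nat.mod_lt _ hp)
      = p[(b + t) % p.length]'(Nat.mod_lt _ hp)) :
    ∀ j, j < B → p[(b + j) % p.length]'(Nat.mod_lt _ hp)
      = p[(b + j % m') % p.length]'(Nat.mod_lt _ hp) := by
  intro j
  induction j using Nat.strong_induction_on with
  | _ j ih =>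
    intro hj
    by_cases hc : j < m'
    · simp only [Nat.mod_eq_of_lt hc]
    · have e1 : j % m' = (j - m') % m' := Nat.mod_eq_sub_mod (le_of_not_gt hc)
      have e2 : b + j = b + (j - m') + m' := by omega
      simp only [e1]
      rw [← ih (j - m') (by omega) (by omega)]
      simp only [e2]
      exact step (j - m') (by omega)

lemma key {α : Type*} (k : ℕ) (hk : 2 ≤ k) (p s : List α) (hp : 0 < p.length)
    (hs : 0 < s.length) (hm : s.length < p.length)
    (hinf : listPow s k <:+: listPow p (2*k)) :
    ∃ y : List α, y <:+: listPow p k ∧ y ≠ listPow p k ∧ IsKPower k y := by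
  obtain ⟨x, z, hxz⟩ := hinf
  have hbig : 2*k*p.length = k*p.length + k*p.length := by ring
  have hkm : k * s.length < k * p.length := by
    exact Nat.mul_lt_mul_of_le_of_lt (le_refl k) hm (by omega)
  have hlenX : x.length + k * s.length + z.length = 2 * k * p.length := by
    have := congrArg List.length hxz
    simp [length_listPow] at this
    omega
  -- main periodic fact
  have main : ∀ j, j < k * s.length →
      p[(x.length + j) % p.length]'(Nat.mod_lt _ hp)
        = s[j % s.length]'(Nat.mod_lt _ hs) := by
    intro j hj
    have h1 : x.length + j < (listPow p (2*k)).length := by rw [length_listPow]; omega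
    have h2 : (listPow p (2*k))[x.length + j]'h1
        = p[(x.length+j) % p.length]'(Nat.mod_lt _ hp) :=
      getElem_listPow p (2*k) (x.length+j) hp h1
    rw [← h2]
    have h3 : x.length + j < (x ++ (listPow s k ++ z)).length := by
      rw [← List.append_assoc, hxz]; exact h1
    have h4 : (listPow p (2*k))[x.length + j]'h1 = (x ++ (listPow s k ++ z))[x.length + j]'h3 := by
      apply List.getElem_of_eq
      rw [← List.append_assoc, hxz]
    rw [h4, List.getElem_append_right (by omega)]
    have h5 : x.length + j - x.length < (listPow s k).length := by rw [length_listPow]; omega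
    rw [List.getElem_append_left h5]
    have h6 : (listPow s k)[x.length + j - x.length]'h5
        = s[(x.length + j - x.length) % s.length]'(Nat.mod_lt _ hs) :=
      getElem_listPow s k _ hs h5
    rw [h6]
    have : x.length + j - x.length = j := by omega
    simp only [this]
  set i' := x.length % p.length with hi'def
  have hi'n : i' < p.length := Nat.mod_lt _ hp
  have main' : ∀ j, j < k * s.length →
      p[(i' + j) % p.length]'(Nat.mod_lt _ hp)
        = s[j % s.length]'(Nat.mod_lt _ hs) := by
    intro j hj
    have : (i' + j) % p.length = (x.length + j) % p.length :=
      Nat.mod_add_mod x.length p.length j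
    simp only [this]
    exact main j hj
  by_cases hcase : i' + k * s.length ≤ k * p.length
  · -- Case A
    refine ⟨(List.drop i' (listPow p k)).take (k*s.length), ?_, ?_,
      s, List.ne_nil_of_length_pos hs, ?_⟩
    · exact ((List.take_prefix _ _).isInfix).trans ((List.drop_suffix _ _).isInfix)
    · intro hcontra
      have := congrArg List.length hcontra
      simp [length_listPow] at this
      omega
    · apply eq_listPow_of_getElem s _ hs k
      · simp [length_listPow]; omega
      · intro j hj
        have hj' : j < k * s.length := by
          simp [length_listPow] at hj; omega
        have hd : i' + j < (listPow p k).length := by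
          rw [length_listPow]; omega
        rw [List.getElem_take, List.getElem_drop]
        rw [getElem_listPow p k (i' + j) hp hd]
        exact main' j hj'
  · -- Case B
    push_neg at hcase
    obtain ⟨k', rfl⟩ : ∃ k', k = k' + 2 := ⟨k - 2, by omega⟩
    have hbr1 : (k'+2) * p.length = k' * p.length + 2 * p.length := by ring
    have hbr2 : (k'+2) * s.length = k' * s.length + 2 * s.length := by ring
    have hbr3 : k' * s.length ≤ k' * p.length := Nat.mul_le_mul_left k' (le_of_lt hm)
    have h2m : p.length < 2 * s.length := by omega
    have hm'pos : 0 < p.length - s.length := by omega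
    have hsum : (k'+2) * (p.length - s.length) + (k'+2) * s.length = (k'+2) * p.length := by
      rw [← Nat.mul_add]
      congr 1
      omega
    have hkm' : (k'+2) * (p.length - s.length) + 2 ≤ p.length := by omega
    set P := (i' + s.length) % p.length with hPdef
    have hPn : P < p.length := Nat.mod_lt _ hp
    have hfitB : P + (k'+2) * (p.length - s.length)
        ≤ (k'+2) * p.length := by omega
    -- strengthened step
    have step' : ∀ t, t + (p.length - s.length) < (k'+2) * (p.length - s.length) →
        p[(i' + s.length + t + (p.length - s.length)) % p.length]'(Nat.mod_lt _ hp)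
          = p[(i' + s.length + t) % p.length]'(Nat.mod_lt _ hp) := by
      intro t ht
      have hbr4 : (k'+2) * (p.length - s.length)
          = (k'+1) * (p.length - s.length) + (p.length - s.length) := by ring
      have hbr5 : (k'+1) * (p.length - s.length) ≤ (k'+1) * s.length :=
        Nat.mul_le_mul_left (k'+1) (by omega)
      have hbr6 : (k'+2) * s.length = (k'+1) * s.length + s.length := by ring
      have ht2 : s.length + t < (k'+2) * s.length := by omega
      have e1 : i' + s.length + t + (p.length - s.length)
          = i' + t + p.length := by omega
      have e2 : (i' + t + p.length) % p.length
          = (i' + t) % p.length := Nat.add_mod_right _ _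
      rw [e1]
      simp only [e2]
      have l1 := main' t (by omega)
      have l2 := main' (s.length + t) ht2
      have e3 : (s.length + t) % s.length = t % s.length := Nat.add_mod_left _ _
      simp only [e3] at l2
      have e4 : i' + (s.length + t) = i' + s.length + t := by
        omega
      simp only [e4] at l2
      rw [l1, l2]
    have claim := mod_reduce p hp (p.length - s.length)
      (i' + s.length) ((k'+2) * (p.length - s.length)) hm'pos step'
    -- construct the k-power
    have hs'lenpre : ((listPow p (k'+2)).drop (P)).length
        = (k'+2) * p.length - P := by
      simp [length_listPow]
    have hfit1 : (p.length - s.length) ≤ (k'+2) * (p.length - s.length) :=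
      Nat.le_mul_of_pos_left _ (by omega)
    refine ⟨(List.drop (P)
        (listPow p (k'+2))).take ((k'+2) * (p.length - s.length)), ?_, ?_,
      (List.drop (P)
        (listPow p (k'+2))).take (p.length - s.length), ?_, ?_⟩
    · exact ((List.take_prefix _ _).isInfix).trans ((List.drop_suffix _ _).isInfix)
    · intro hcontra
      have := congrArg List.length hcontra
      simp [length_listPow] at this
      omega
    · apply List.ne_nil_of_length_pos
      simp [length_listPow]
      omega
    · have hs'len : ((List.drop (P)
          (listPow p (k'+2))).take (p.length - s.length)).length = p.length - s.length := by
        simp [length_listPow]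
        omega
      apply eq_listPow_of_getElem _ _ (by omega : 0 < ((List.drop (P) (listPow p (k'+2))).take (p.length - s.length)).length) (k'+2)
      · rw [hs'len]
        simp [length_listPow]
        omega
      · intro j hj
        have hj' : j < (k'+2) * (p.length - s.length) := by
          simp [length_listPow] at hj; omega
        have hjm : j % (p.length - s.length) < p.length - s.length := Nat.mod_lt _ hm'pos
        have hd1 : P + j
            < (listPow p (k'+2)).length := by rw [length_listPow]; omega
        have hd2 : P + j % (p.length - s.length)
            < (listPow p (k'+2)).length := by rw [length_listPow]; omega
        simp only [hs'len]
        rw [List.getElem_take, List.getElem_drop, List.getElem_take, List.getElem_drop]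
        rw [getElem_listPow p (k'+2) _ hp hd1, getElem_listPow p (k'+2) _ hp hd2]
        have c1 : (P + j) % p.length
            = (i' + s.length + j) % p.length := by
          rw [hPdef]; exact Nat.mod_add_mod _ _ _
        have c2 : (P + j % (p.length - s.length)) % p.length
            = (i' + s.length + j % (p.length - s.length)) % p.length := by
          rw [hPdef]; exact Nat.mod_add_mod _ _ _
        simp only [c1, c2]
        exact claim j hj'

lemma getElem_append_middle {α : Type*} (x y z : List α) (j : ℕ) (hj : j < y.length)
    (hd : x.length + j < (x ++ (y ++ z)).length) :
    (x ++ (y ++ z))[x.length + j]'hd = y[j]'hj := by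
  rw [List.getElem_append_right (Nat.le_add_right _ _)]
  have e2 : x.length + j - x.length = j := by omega
  simp only [e2]
  rw [List.getElem_append_left hj]


/-- Every conjugate of a simple `k`-power is a simple `k`-power. -/
theorem conjugate_of_simpleKPower {α : Type*} (k : ℕ) (hk : 2 ≤ k) (u v : List α)
    (h : SimpleKPower k (u ++ v)) : SimpleKPower k (v ++ u) := by
  obtain ⟨⟨p, hpne, hw⟩, hmin⟩ := h
  have hp : 0 < p.length := List.length_pos_iff.mpr hpne
  have hlen : u.length + v.length = k * p.length := by
    have := congrArg List.length hw
    simp [length_listPow] at this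
    omega
  have hbig : 2*k*p.length = k*p.length + k*p.length := by ring
  have hX2 : listPow p (2*k) = u ++ ((v ++ u) ++ v) := by
    have h1 : listPow p (2*k) = listPow p k ++ listPow p k := by
      have e : 2*k = k + k := by ring
      rw [e, listPow_add]
    rw [h1, ← hw]
    simp [List.append_assoc]
  constructor
  · refine ⟨p.rotate (u.length % p.length), ?_, ?_⟩
    · apply List.ne_nil_of_length_pos
      rw [List.length_rotate]
      exact hp
    · have hq : 0 < (p.rotate (u.length % p.length)).length := by
        rw [List.length_rotate]; exact hp
      apply eq_listPow_of_getElem _ _ hq k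
      · simp [List.length_rotate]
        omega
      · intro j hj
        have hj' : j < k * p.length := by simp at hj; omega
        have hd : u.length + j < (listPow p (2*k)).length := by
          rw [length_listPow]; omega
        have hd2 : u.length + j < (u ++ ((v ++ u) ++ v)).length := by rw [← hX2]; exact hd
        have e1 : (v ++ u)[j]'(by simpa using hj)
            = (listPow p (2*k))[u.length + j]'hd := by
          rw [List.getElem_of_eq hX2 hd]
          exact (getElem_append_middle u (v ++ u) v j (by simpa using hj) hd2).symm
        rw [e1, getElem_listPow p (2*k) _ hp hd]
        have hjr : j % (p.rotate (u.length % p.length)).length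
            < (p.rotate (u.length % p.length)).length := Nat.mod_lt _ hq
        have e3 : j % (p.rotate (u.length % p.length)).length = j % p.length := by
          rw [List.length_rotate]
        simp only [e3]
        rw [List.getElem_rotate]
        have e4 : (j % p.length + u.length % p.length) % p.length
            = (u.length + j) % p.length := by
          rw [← Nat.add_mod, Nat.add_comm]
        simp only [e4]
  · rintro y hyinf hyne ⟨s, hsne, rfl⟩
    have hs : 0 < s.length := List.length_pos_iff.mpr hsne
    have hyle : (listPow s k).length ≤ (v++u).length := hyinf.length_le
    have hle2 : k * s.length ≤ k * p.length := by
      simp [length_listPow] at hyle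
      omega
    have hmlt : s.length < p.length := by
      rcases Nat.lt_or_ge s.length p.length with h1 | h1
      · exact h1
      · exfalso
        apply hyne
        apply hyinf.eq_of_length
        have : s.length = p.length :=
          le_antisymm (Nat.le_of_mul_le_mul_left hle2 (by omega)) h1
        rw [length_listPow, this, List.length_append]
        omega
    have hvuinf : (v ++ u) <:+: listPow p (2*k) := ⟨u, v, by rw [hX2, List.append_assoc]⟩
    obtain ⟨y', h1, h2, h3⟩ := key k hk p s hp hs hmlt (hyinf.trans hvuinf)
    rw [← hw] at h1 h2
    exact hmin y' h1 h2 h3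
end

section
/- If p is a circularly squarefree word (all conjugates of p are squarefree), then p^2 is a simple square: p^2 contains no square as a proper factor. -/
/-- A square is a nonempty word of the form `q^2`. -/
def IsSquareWord {α : Type*} (w : List α) : Prop := ∃ q : List α, q ≠ [] ∧ w = listPow q 2

/-- A word is squarefree if none of its factors is a square. -/
def SquarefreeWord {α : Type*} (w : List α) : Prop := ∀ y : List α, y <:+: w → ¬ IsSquareWord y

lemma listPow_two {α : Type*} (q : List α) : listPow q 2 = q ++ q := by
  simp [listPow, List.replicate]

lemma pref_helper {α : Type*} {a b c d : List α} (h : a ++ b = c ++ d)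
    (hl : a.length ≤ c.length) : ∃ e, c = a ++ e := by
  rcases List.append_eq_append_iff.mp h with ⟨e, he, _⟩ | ⟨e, he, _⟩
  · exact ⟨e, he⟩
  · have hlen := congrArg List.length he
    simp only [List.length_append] at hlen
    have he0 : e = [] := List.length_eq_zero_iff.mp (by omega)
    subst he0
    exact ⟨[], by simpa using he.symm⟩

lemma rot_trans {α : Type*} {p u v x y : List α} (h1 : p = u ++ v)
    (h2 : v ++ u = x ++ y) : ∃ u' v', p = u' ++ v' ∧ v' ++ u' = y ++ x := by
  by_cases hl : x.length ≤ v.length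
  · obtain ⟨v2, hv2⟩ := pref_helper h2.symm hl
    subst hv2
    have hy : y = v2 ++ u := by
      have := h2
      rw [List.append_assoc] at this
      exact (List.append_cancel_left this).symm
    exact ⟨u ++ x, v2, by simp [h1, List.append_assoc], by simp [hy, List.append_assoc]⟩
  · obtain ⟨x2, hx2⟩ := pref_helper h2 (le_of_not_ge hl)
    subst hx2
    have hu : u = x2 ++ y := by
      have := h2
      rw [List.append_assoc] at this
      exact List.append_cancel_left this
    exact ⟨x2, y ++ v, by simp [h1, hu, List.append_assoc], by simp [List.append_assoc]⟩

/-- If `p` is circularly squarefree (all conjugates of `p` are squarefree), then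
`p^2` is a simple square: `p^2` contains no square as a proper factor. -/
theorem circularly_squarefree_pow_simple {α : Type*} (p : List α) (hp : p ≠ [])
    (hcirc : ∀ u v : List α, p = u ++ v → SquarefreeWord (v ++ u)) :
    IsSquareWord (listPow p 2) ∧
      ∀ y : List α, y <:+: listPow p 2 → y ≠ listPow p 2 → ¬ IsSquareWord y := by
  have hsfp : SquarefreeWord p := by
    have := hcirc p [] (by simp)
    simpa using this
  constructor
  · exact ⟨p, hp, rfl⟩
  · rintro y hinf hne ⟨q, hq, hy⟩
    rw [listPow_two] at hy hinf hne
    subst hy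
    obtain ⟨s, t, hst0⟩ := hinf
    have hst : s ++ ((q ++ q) ++ t) = p ++ p := by simpa [List.append_assoc] using hst0
    set n := p.length with hn
    set m := q.length with hm
    have hm1 : 1 ≤ m := by
      cases q with
      | nil => exact absurd rfl hq
      | cons a l => simp [hm]
    have hlen := congrArg List.length hst
    simp only [List.length_append] at hlen
    -- m < n
    have hmn : m < n := by
      by_contra hcon
      push_neg at hcon
      have hs0 : s = [] := List.length_eq_zero_iff.mp (by omega)
      have ht0 : t = [] := List.length_eq_zero_iff.mp (by omega)
      subst hs0; subst ht0
      simp at hst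
      exact hne hst
    by_cases hsn : n ≤ s.length
    · -- the square lies inside the second copy of p
      obtain ⟨s2, hs2⟩ := pref_helper hst.symm hsn
      rw [hs2] at hst
      have hinp : p = s2 ++ ((q ++ q) ++ t) := by
        rw [List.append_assoc] at hst
        exact (List.append_cancel_left hst).symm
      exact hsfp (q ++ q) ⟨s2, t, by rw [← List.append_assoc] at hinp; exact hinp.symm⟩
        ⟨q, hq, (listPow_two q).symm⟩
    · push_neg at hsn
      -- s is a proper prefix of p : p = s ++ v
      obtain ⟨v, hv⟩ := pref_helper hst (by omega)
      have hvlen : v.length = n - s.length := by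
        have := congrArg List.length hv
        simp [List.length_append] at this
        omega
      -- q ++ q ++ t = v ++ s ++ v
      have hkey : q ++ (q ++ t) = v ++ (s ++ v) := by
        have h2 := hst
        rw [hv] at h2
        simp only [List.append_assoc] at h2
        have h3 := List.append_cancel_left h2
        simpa [List.append_assoc] using h3
      have hvs : (v ++ s).length = n := by
        simp [List.length_append]
        omega
      have hsfw : SquarefreeWord (v ++ s) := hcirc s v hv
      by_cases h2m : 2 * m ≤ n
      · -- q ++ q fits inside the conjugate v ++ s
        have hkey2 : (q ++ q) ++ t = (v ++ s) ++ v := by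
          simpa [List.append_assoc] using hkey
        obtain ⟨e, he⟩ := pref_helper hkey2
          (by simp only [List.length_append]; omega)
        exact hsfw (q ++ q) ⟨[], e, by simp [he]⟩ ⟨q, hq, (listPow_two q).symm⟩
      · push_neg at h2m
        -- q is a prefix of w = v ++ s : w = q ++ b with b nonempty
        have hkey2 : q ++ (q ++ t) = (v ++ s) ++ v := by
          simpa [List.append_assoc] using hkey
        obtain ⟨b, hb⟩ := pref_helper hkey2 (by rw [hvs]; omega)
        have hblen : b.length = n - m := by
          have := congrArg List.length hb
          simp only [List.length_append] at this
          omega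
        -- b is a prefix of q : q = b ++ c
        have hstep : q ++ (q ++ t) = (v ++ s) ++ v := hkey2
        have hstep2 : q ++ t = b ++ v := by
          rw [hb, List.append_assoc] at hkey2
          exact List.append_cancel_left hkey2
        obtain ⟨c, hc⟩ := pref_helper hstep2.symm (by omega)
        -- w = b ++ (c ++ b); the conjugate (c ++ b) ++ b contains the square b ++ b
        have hw : v ++ s = b ++ (c ++ b) := by
          rw [hb, hc, List.append_assoc]
        obtain ⟨u', v', hp', hrot⟩ := rot_trans hv hw
        have hbne : b ≠ [] := by
          intro h0
          rw [h0] at hblen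
          simp at hblen
          omega
        exact hcirc u' v' hp' (b ++ b)
          (by rw [hrot]; exact ⟨c, [], by simp [List.append_assoc]⟩)
          ⟨b, hbne, (listPow_two b).symm⟩
end

section
/- For every DFA D over the binary alphabet with N states, the language Ψ(L(D)) ⊆ Σ_25* is regular and is accepted by a DFA with at most N^{4N} states. -/
/-- The Thue–Morse morphism `μ(0) = 01`, `μ(1) = 10`, with `false` as 0 and `true` as 1. -/
def mu (w : List Bool) : List Bool :=
  w.flatMap fun b => if b then [true, false] else [false, true]

/-- Carpi's map `Φ : Σ₂₅* → Σ₂*`: `Φ(ε) = ε` and `Φ(aw) = Φ_l(a) μ(Φ(w)) Φ_r(a)`. -/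
def Phi (fl fr : Fin 25 → List Bool) : List (Fin 25) → List Bool
  | [] => []
  | a :: w => fl a ++ mu (Phi fl fr w) ++ fr a

/-- The set `H = {ε, 0, 1, 00, 11}`. -/
def Hset : Set (List Bool) :=
  {[], [false], [true], [false, false], [true, true]}

/-- Generalized morphism: substitute `u` for `0` and `v` for `1`. -/
def mw (u v : List Bool) (h : List Bool) : List Bool := h.flatMap fun b => cond b v u

lemma mw_append (u v h₁ h₂ : List Bool) : mw u v (h₁ ++ h₂) = mw u v h₁ ++ mw u v h₂ := by
  simp [mw]

lemma mw_mu (u v h : List Bool) : mw u v (mu h) = mw (u ++ v) (v ++ u) h := by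
  induction h with
  | nil => rfl
  | cons b t ih => cases b <;> simp [mw, mu, List.flatMap_cons] at ih ⊢ <;> simp [ih]

lemma mw_id (h : List Bool) : mw [false] [true] h = h := by
  induction h with
  | nil => rfl
  | cons b t ih => cases b <;> simp [mw, List.flatMap_cons] at ih ⊢ <;> simp [ih]

/-- The state space of the simulating DFA. -/
abbrev CSt (σ : Type) := σ × (σ → σ) × (σ → σ) × (σ → σ)

/-- The transition of the simulating DFA. -/
def cstep {σ : Type} (fl fr : Fin 25 → List Bool) (s : CSt σ) (a : Fin 25) : CSt σ :=
  ((fl a).foldl (fun q b => cond b (s.2.2.2 q) (s.2.2.1 q)) s.1,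
   fun q => s.2.1 ((fr a).foldl (fun q b => cond b (s.2.2.2 q) (s.2.2.1 q)) q),
   fun q => s.2.2.2 (s.2.2.1 q),
   fun q => s.2.2.1 (s.2.2.2 q))

lemma foldl_eval {σ : Type} (D : DFA Bool σ) (u v : List Bool) :
    ∀ (h : List Bool) (p : σ),
      h.foldl (fun q b => cond b (D.evalFrom q v) (D.evalFrom q u)) p
        = D.evalFrom p (mw u v h) := by
  intro h
  induction h with
  | nil => intro p; rfl
  | cons b t ih =>
    intro p
    cases b <;>
      simp [mw, List.flatMap_cons, ih, DFA.evalFrom_of_append] at ih ⊢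

lemma key_s14 {σ : Type} (D : DFA Bool σ) (fl fr : Fin 25 → List Bool) :
    ∀ (w : List (Fin 25)) (u v : List Bool) (p : σ) (G : σ → σ),
      (List.foldl (cstep fl fr)
          (p, G, fun q => D.evalFrom q u, fun q => D.evalFrom q v) w).2.1
        ((List.foldl (cstep fl fr)
          (p, G, fun q => D.evalFrom q u, fun q => D.evalFrom q v) w).1)
      = G (D.evalFrom p (mw u v (Phi fl fr w))) := by
  intro w
  induction w with
  | nil => intro u v p G; simp [Phi, mw]
  | cons a t ih =>
    intro u v p G
    have h3 : (fun q => D.evalFrom (D.evalFrom q u) v) = fun q => D.evalFrom q (u ++ v) := by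
      funext q; rw [DFA.evalFrom_of_append]
    have h4 : (fun q => D.evalFrom (D.evalFrom q v) u) = fun q => D.evalFrom q (v ++ u) := by
      funext q; rw [DFA.evalFrom_of_append]
    have hstep : cstep fl fr (p, G, fun q => D.evalFrom q u, fun q => D.evalFrom q v) a
        = (D.evalFrom p (mw u v (fl a)),
           fun q => G (D.evalFrom q (mw u v (fr a))),
           fun q => D.evalFrom q (u ++ v),
           fun q => D.evalFrom q (v ++ u)) := by
      simp only [cstep, foldl_eval, h3, h4]
    rw [List.foldl_cons, hstep, ih]
    rw [Phi, mw_append, mw_append, mw_mu, DFA.evalFrom_of_append, DFA.evalFrom_of_append]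

/-- For every DFA `D` over the binary alphabet with `N` states, the language
`Ψ(L(D)) = Φ⁻¹(L(D)) ⊆ Σ₂₅*` is regular, accepted by a DFA with at most `N^{4N}` states. -/
theorem psi_regular {σ : Type} [Fintype σ] (D : DFA Bool σ) (N : ℕ)
    (hN : Fintype.card σ = N) (fl fr : Fin 25 → List Bool)
    (hmem : ∀ a : Fin 25, fl a ∈ Hset ∧ fr a ∈ Hset)
    (hbij : ∀ h ∈ Hset, ∀ h' ∈ Hset, ∃! a : Fin 25, fl a = h ∧ fr a = h') :
    ∃ (σ' : Type) (_ : Fintype σ') (D' : DFA (Fin 25) σ'),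
      Fintype.card σ' ≤ N ^ (4 * N) ∧
      D'.accepts = {w : List (Fin 25) | Phi fl fr w ∈ D.accepts} := by
  classical
  have hpos : 1 ≤ N := by
    rw [← hN]; exact Fintype.card_pos_iff.mpr ⟨D.start⟩
  refine ⟨CSt σ, inferInstance,
    { step := cstep fl fr
      start := (D.start, id, fun q => D.evalFrom q [false], fun q => D.evalFrom q [true])
      accept := {s | s.2.1 s.1 ∈ D.accept} }, ?_, ?_⟩
  · have : Fintype.card (CSt σ) = N ^ (3 * N + 1) := by
      simp [CSt, Fintype.card_fun, hN]
      ring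
    rw [this]
    exact Nat.pow_le_pow_right hpos (by omega)
  · ext w
    have hk := key_s14 D fl fr w [false] [true] D.start id
    simp only [DFA.mem_accepts, DFA.eval, DFA.evalFrom, Set.mem_setOf_eq] at *
    rw [hk, mw_id]
    rfl
end
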